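/- arXiv:2012.10048 — 2 statements merged into one kernel-verified Lean document; each statement's English description precedes it below -/
import Mathlib

section
/- Let A_p(x,μ) = √(π/2)·p₁·[erf((μ+iω₀)/√(2ε)) - erf((μ₀+iω₀)/√(2ε))]·e^{(μ+iω₀)²/(2ε)} + √(π/2)·p₂ cos(x)·[erf((μ+iω₀-εd)/√(2ε)) - erf((μ₀+iω₀-εd)/√(2ε))]·e^{(μ+iω₀-εd)²/(2ε)}. Then A_p satisfies the linear CGL equation ε ∂_μ A_p = (μ+iω₀)A_p + √ε (p₁ + p₂ cos x) + ε d ∂_x² A_p with A_p(x,μ₀) = 0. -/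
/-!
Since `erf' z = (2/√π) e^{-z²}`, each product `(erf (w/s) - erf (w₀/s)) e^{w²/s²}` solves the
linear ODE `(s²/2) F' = w F + s/√π` with `F(w₀) = 0` (variation of constants). With `s² = 2ε`
the constant `√(π/2) · s/√π` is `√ε`. In `x` the second summand is a multiple of `cos x`, an
eigenfunction of `∂ₓ²` with eigenvalue `-1`, so the diffusion term `ε d ∂ₓ² A_p` is exactly
absorbed by the shift `w = μ + iω₀ - εd` in that summand.

The derivative of `cerf` comes from writing `z ∫₀¹ f(zt) dt` as the integral of the holomorphic
`f` along the segment `[0, z]`, which is a primitive of `f` by the Poincaré lemma.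
-/

/-- The entire complex error function `erf z = (2/√π) ∫₀^z e^{-t²} dt`,
parametrized along the straight segment from `0` to `z`. -/
noncomputable def cerf (z : ℂ) : ℂ :=
  (2 / Real.sqrt Real.pi : ℝ) * z * ∫ t in (0:ℝ)..1, Complex.exp (-(z * t)^2)

open AffineMap Complex

theorem hasDerivAt_mul_integral_comp_mul {𝕜 : Type*} [RCLike 𝕜] {f : 𝕜 → 𝕜}
    (hf : Differentiable 𝕜 f) (z : 𝕜) :
    HasDerivAt (fun w : 𝕜 => w * ∫ t in (0:ℝ)..1, f (w * t)) (f z) z := by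
  let ω : 𝕜 → 𝕜 →L[𝕜] 𝕜 := fun w => ContinuousLinearMap.smulRightL 𝕜 𝕜 𝕜 1 (f w)
  have hprimitive :=
    convex_univ.hasFDerivWithinAt_curveIntegral_segment_of_hasFDerivWithinAt_symmetric
      (ω := ω) (a := 0) (b := z)
      (fun w _ => ((ContinuousLinearMap.smulRightL 𝕜 𝕜 𝕜 1).hasFDerivAt.comp_hasDerivAt w
        (hf w).hasDerivAt).hasFDerivAt.hasFDerivWithinAt.restrictScalars ℝ)
      (by
        rintro a - x - y -
        simp only [ContinuousLinearMap.smulRightL_apply_apply,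
          ContinuousLinearMap.coe_restrictScalars', ContinuousLinearMap.toSpanSingleton_apply,
          smul_apply, ContinuousLinearMap.smulRight_apply, one_apply_eq_self, smul_eq_mul]
        ring) trivial trivial
  have hsegment :
      (fun w : 𝕜 => w * ∫ t in (0:ℝ)..1, f (w * t)) = (∫ᶜ x in .segment 0 ·, ω x) := by
    ext w
    rw [curveIntegral_segment]
    simp [ω, lineMap_apply, RCLike.real_smul_eq_coe_mul, ← intervalIntegral.integral_const_mul,
      mul_comm]
  simpa [hsegment, ω] using (hprimitive.hasFDerivAt Filter.univ_mem).hasDerivAt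

theorem hasDerivAt_cerf (z : ℂ) :
    HasDerivAt cerf ((2 / Real.sqrt Real.pi : ℝ) * exp (-z ^ 2)) z := by
  have h := (hasDerivAt_mul_integral_comp_mul (f := fun w : ℂ => exp (-w ^ 2)) (by fun_prop)
    z).const_mul ((2 / Real.sqrt Real.pi : ℝ) : ℂ)
  have hcerf : cerf = fun y => ((2 / Real.sqrt Real.pi : ℝ) : ℂ) *
      (y * ∫ t in (0:ℝ)..1, exp (-(y * t) ^ 2)) := by
    funext y
    simp only [cerf, mul_assoc]
  rwa [hcerf]

/-- With `s = √(2ε)`, `w = μ + a` and `w₀ = μ₀ + a`, this is the product of an erf bracket and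
a Gaussian factor occurring in each summand of `A_p` (for `a = iω₀` and `a = iω₀ - εd`). -/
noncomputable def erfProfile (s w₀ w : ℂ) : ℂ :=
  (cerf (w / s) - cerf (w₀ / s)) * exp (w ^ 2 / s ^ 2)

theorem erfProfile_self (s w₀ : ℂ) : erfProfile s w₀ w₀ = 0 := by
  simp [erfProfile]

theorem hasDerivAt_erfProfile {s : ℂ} (hs : s ≠ 0) (w₀ w : ℂ) :
    HasDerivAt (erfProfile s w₀)
      (2 / s ^ 2 * (w * erfProfile s w₀ w + s / Real.sqrt Real.pi)) w := by
  have hcerf := (hasDerivAt_cerf (w / s)).comp w ((hasDerivAt_id' w).div_const s)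
  have hexp := ((hasDerivAt_pow 2 w).div_const (s ^ 2)).cexp
  refine ((hcerf.sub_const (cerf (w₀ / s))).mul hexp).congr_deriv ?_
  have hinv : exp (-(w / s) ^ 2) = (exp (w ^ 2 / s ^ 2))⁻¹ := by
    rw [div_pow, Complex.exp_neg]
  have hpi : (Real.sqrt Real.pi : ℂ) ≠ 0 := by
    exact_mod_cast (Real.sqrt_pos.mpr Real.pi_pos).ne'
  simp only [erfProfile, Function.comp_def, hinv]
  push_cast
  field_simp
  ring

theorem hasDerivAt_erfProfile_comp_ofReal_add {s : ℂ} (hs : s ≠ 0) (w₀ a : ℂ) (μ : ℝ) :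
    HasDerivAt (fun μ' : ℝ => erfProfile s w₀ (μ' + a)) (deriv (erfProfile s w₀) (μ + a)) μ :=
  ((hasDerivAt_erfProfile hs w₀ _).differentiableAt.hasDerivAt.comp_add_const _ a).comp_ofReal

theorem ofReal_sqrt_sq {r : ℝ} (hr : 0 ≤ r) : ((Real.sqrt r : ℝ) : ℂ) ^ 2 = r := by
  rw [← ofReal_pow, Real.sq_sqrt hr]

theorem mul_deriv_erfProfile_sqrt_two_mul {ε : ℝ} (hε : 0 < ε) (w₀ w : ℂ) :
    ε * deriv (erfProfile (Real.sqrt (2 * ε)) w₀) w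
      = w * erfProfile (Real.sqrt (2 * ε)) w₀ w + Real.sqrt (2 * ε) / Real.sqrt Real.pi := by
  have hs : ((Real.sqrt (2 * ε) : ℝ) : ℂ) ≠ 0 :=
    ofReal_ne_zero.mpr (Real.sqrt_pos.mpr (by positivity)).ne'
  have hε' : (ε : ℂ) ≠ 0 := ofReal_ne_zero.mpr hε.ne'
  rw [(hasDerivAt_erfProfile hs w₀ w).deriv, ofReal_sqrt_sq (by positivity)]
  push_cast
  field_simp

theorem sqrt_pi_div_two_mul_sqrt_two_mul_div_sqrt_pi (ε : ℝ) :
    Real.sqrt (Real.pi / 2) * (Real.sqrt (2 * ε) / Real.sqrt Real.pi) = Real.sqrt ε := by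
  have hpi : Real.sqrt Real.pi ≠ 0 := (Real.sqrt_pos.mpr Real.pi_pos).ne'
  rw [mul_div_assoc', ← Real.sqrt_mul (by positivity),
    show Real.pi / 2 * (2 * ε) = Real.pi * ε by ring, Real.sqrt_mul Real.pi_pos.le]
  field_simp

theorem deriv_deriv_const_add_mul_cos (α β : ℂ) (x : ℝ) :
    deriv (deriv fun y : ℝ => α + β * (Real.cos y : ℂ)) x = -(β * Real.cos x) := by
  have hderiv : deriv (fun y : ℝ => α + β * (Real.cos y : ℂ)) = fun y => -(β * Real.sin y) :=
    funext fun y => (((Real.hasDerivAt_cos y).ofReal_comp.const_mul β).const_add α).deriv.trans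
      (by push_cast; ring)
  rw [hderiv, ((Real.hasDerivAt_sin x).ofReal_comp.const_mul β).fun_neg.deriv]

theorem stmt_8_general (ε ω₀ μ₀ p₁ p₂ : ℝ) (hε : 0 < ε) (d : ℂ)
    (Ap : ℝ → ℝ → ℂ)
    (hAp : ∀ x μ : ℝ, Ap x μ =
      (Real.sqrt (Real.pi/2) : ℂ) * (p₁ : ℂ) *
        (cerf (((μ:ℂ) + Complex.I*ω₀)/(Real.sqrt (2*ε) : ℂ))
          - cerf (((μ₀:ℂ) + Complex.I*ω₀)/(Real.sqrt (2*ε) : ℂ))) *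
        Complex.exp (((μ:ℂ) + Complex.I*ω₀)^2/(2*(ε:ℂ)))
      + (Real.sqrt (Real.pi/2) : ℂ) * (p₂ : ℂ) * (Real.cos x : ℂ) *
        (cerf (((μ:ℂ) + Complex.I*ω₀ - (ε:ℂ)*d)/(Real.sqrt (2*ε) : ℂ))
          - cerf (((μ₀:ℂ) + Complex.I*ω₀ - (ε:ℂ)*d)/(Real.sqrt (2*ε) : ℂ))) *
        Complex.exp (((μ:ℂ) + Complex.I*ω₀ - (ε:ℂ)*d)^2/(2*(ε:ℂ)))) :
    (∀ x μ : ℝ, (ε:ℂ) * deriv (fun μ' => Ap x μ') μ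
      = ((μ:ℂ) + Complex.I*ω₀) * Ap x μ
        + (Real.sqrt ε : ℂ) * ((p₁ : ℂ) + (p₂ : ℂ) * (Real.cos x : ℂ))
        + (ε:ℂ) * d * deriv (fun x' => deriv (fun x'' => Ap x'' μ) x') x)
    ∧ ∀ x : ℝ, Ap x μ₀ = 0 := by
  set s : ℂ := (Real.sqrt (2 * ε) : ℂ)
  set k : ℂ := (Real.sqrt (Real.pi / 2) : ℂ)
  set a₁ : ℂ := I * ω₀
  set a₂ : ℂ := I * ω₀ - ε * d
  have hAp' (x μ : ℝ) : Ap x μ = k * p₁ * erfProfile s (μ₀ + a₁) (μ + a₁)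
      + k * p₂ * erfProfile s (μ₀ + a₂) (μ + a₂) * Real.cos x := by
    have hs2 : s ^ 2 = 2 * ε := by rw [ofReal_sqrt_sq (by positivity), ofReal_mul, ofReal_ofNat]
    rw [hAp, ← hs2]
    simp only [erfProfile, a₂, add_sub_assoc]
    ring
  refine ⟨fun x μ => ?_, fun x => by simp [hAp', erfProfile_self]⟩
  have hs : s ≠ 0 := ofReal_ne_zero.mpr (Real.sqrt_pos.mpr (by positivity)).ne'
  have hμ : HasDerivAt (fun μ' => Ap x μ') (k * p₁ * deriv (erfProfile s (μ₀ + a₁)) (μ + a₁)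
      + k * p₂ * deriv (erfProfile s (μ₀ + a₂)) (μ + a₂) * Real.cos x) μ := by
    simp only [hAp']
    exact ((hasDerivAt_erfProfile_comp_ofReal_add hs _ a₁ μ).const_mul _).add
      (((hasDerivAt_erfProfile_comp_ofReal_add hs _ a₂ μ).const_mul _).mul_const _)
  have hx : deriv (fun x' => deriv (fun x'' => Ap x'' μ) x') x
      = -(k * p₂ * erfProfile s (μ₀ + a₂) (μ + a₂) * Real.cos x) := by
    simp only [hAp']
    exact deriv_deriv_const_add_mul_cos _ _ x
  have hforcing : k * (s / Real.sqrt Real.pi) = Real.sqrt ε := by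
    simp only [k, s]
    exact_mod_cast sqrt_pi_div_two_mul_sqrt_two_mul_div_sqrt_pi ε
  rw [hμ.deriv, hx, hAp' x μ]
  linear_combination k * p₁ * mul_deriv_erfProfile_sqrt_two_mul hε (μ₀ + a₁) (μ + a₁)
    + k * p₂ * Real.cos x * mul_deriv_erfProfile_sqrt_two_mul hε (μ₀ + a₂) (μ + a₂)
    + (p₁ + p₂ * Real.cos x) * hforcing

theorem stmt_8 (ε ω₀ μ₀ p₁ p₂ : ℝ) (hε : 0 < ε) (hω₀ : 0 < ω₀) (d : ℂ)
    (Ap : ℝ → ℝ → ℂ)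
    (hAp : ∀ x μ : ℝ, Ap x μ =
      (Real.sqrt (Real.pi/2) : ℂ) * (p₁ : ℂ) *
        (cerf (((μ:ℂ) + Complex.I*ω₀)/(Real.sqrt (2*ε) : ℂ))
          - cerf (((μ₀:ℂ) + Complex.I*ω₀)/(Real.sqrt (2*ε) : ℂ))) *
        Complex.exp (((μ:ℂ) + Complex.I*ω₀)^2/(2*(ε:ℂ)))
      + (Real.sqrt (Real.pi/2) : ℂ) * (p₂ : ℂ) * (Real.cos x : ℂ) *
        (cerf (((μ:ℂ) + Complex.I*ω₀ - (ε:ℂ)*d)/(Real.sqrt (2*ε) : ℂ))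
          - cerf (((μ₀:ℂ) + Complex.I*ω₀ - (ε:ℂ)*d)/(Real.sqrt (2*ε) : ℂ))) *
        Complex.exp (((μ:ℂ) + Complex.I*ω₀ - (ε:ℂ)*d)^2/(2*(ε:ℂ)))) :
    (∀ x μ : ℝ, (ε:ℂ) * deriv (fun μ' => Ap x μ') μ
      = ((μ:ℂ) + Complex.I*ω₀) * Ap x μ
        + (Real.sqrt ε : ℂ) * ((p₁ : ℂ) + (p₂ : ℂ) * (Real.cos x : ℂ))
        + (ε:ℂ) * d * deriv (fun x' => deriv (fun x'' => Ap x'' μ) x') x)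
    ∧ ∀ x : ℝ, Ap x μ₀ = 0 :=
  stmt_8_general ε ω₀ μ₀ p₁ p₂ hε d Ap hAp
end

section
/- For the Shishkova-type zero-diffusivity limit: if A_p(μ) = (√(2π)·I_a + R(ε))·e^{(μ+iω₀)²/(2ε)} with |R(ε)| ≤ C√ε and I_a > 0, then the solution μ* > 0 of |A_p(μ*)| = 1 satisfies μ*² = ω₀² - 2ε ln(√(2π) I_a) + o(ε) as ε → 0⁺; in particular μ* → ω₀ as ε → 0⁺. -/
open Filter Topology Asymptotics

/-!
Taking logarithms in `‖A‖ · exp ((μ*² - ω₀²) / (2ε)) = 1` gives exactly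
`μ*² - ω₀² = -2ε log ‖A‖` with `A = √(2π) I_a + R(ε)`. Since `R(ε) = O(√ε) → 0`, `‖A‖ → √(2π) I_a > 0`,
so `log ‖A‖ = log (√(2π) I_a) + o(1)` and the error term is `ε · o(1) = o(ε)`; in particular
`μ*² → ω₀²`, and `μ* → ω₀` because `μ* > 0`.
-/

theorem Real.eq_neg_mul_log_of_mul_exp_div_eq_one {a x c : ℝ} (h : a * Real.exp (x / c) = 1)
    (hc : c ≠ 0) : x = -c * Real.log a := by
  have ha : a = Real.exp (-(x / c)) := by
    rw [Real.exp_neg]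
    exact eq_inv_of_mul_eq_one_left h
  rw [ha, Real.log_exp]
  field_simp

theorem tendsto_nhdsGT_zero_of_norm_le_mul_sqrt {E : Type*} [SeminormedAddCommGroup E]
    {f : ℝ → E} {C : ℝ} (hf : ∀ᶠ ε in 𝓝[>] (0 : ℝ), ‖f ε‖ ≤ C * Real.sqrt ε) :
    Tendsto f (𝓝[>] 0) (𝓝 0) := by
  have hsqrt : Tendsto (fun ε : ℝ => C * Real.sqrt ε) (𝓝[>] 0) (𝓝 0) := by
    simpa using ((Real.continuous_sqrt.tendsto 0).const_mul C).mono_left nhdsWithin_le_nhds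
  exact squeeze_zero_norm' hf hsqrt

theorem isLittleO_mul_log_sub_log {α : Type*} {l : Filter α} {a g : α → ℝ} {S : ℝ}
    (ha : Tendsto a l (𝓝 S)) (hS : S ≠ 0) :
    (fun x => g x * (Real.log (a x) - Real.log S)) =o[l] g := by
  have hlog : (fun x => Real.log (a x) - Real.log S) =o[l] (fun _ => (1 : ℝ)) :=
    (isLittleO_one_iff ℝ).2 (by simpa using (ha.log hS).sub_const (Real.log S))
  simpa using (isBigO_refl g l).mul_isLittleO hlog

theorem tendsto_of_tendsto_sq {α : Type*} {l : Filter α} {f : α → ℝ} {w : ℝ}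
    (hf : ∀ᶠ x in l, 0 ≤ f x) (hw : 0 ≤ w) (h : Tendsto (fun x => f x ^ 2) l (𝓝 (w ^ 2))) :
    Tendsto f l (𝓝 w) := by
  refine (Real.sqrt_sq hw ▸ h.sqrt).congr' ?_
  filter_upwards [hf] with x hx
  exact Real.sqrt_sq hx

theorem stmt_18_general (ω₀ Ia C ε₀ : ℝ) (hω₀ : 0 < ω₀) (hIa : 0 < Ia)
    (hε₀ : 0 < ε₀)
    (R : ℝ → ℂ)
    (hR : ∀ ε ∈ Set.Ioo (0:ℝ) ε₀, ‖R ε‖ ≤ C * Real.sqrt ε)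
    (μs : ℝ → ℝ)
    (hμs : ∀ ε ∈ Set.Ioo (0:ℝ) ε₀, 0 < μs ε ∧
      ‖((Real.sqrt (2*Real.pi) * Ia : ℝ) : ℂ) + R ε‖
        * Real.exp (((μs ε)^2 - ω₀^2)/(2*ε)) = 1) :
    (fun ε => (μs ε)^2 - (ω₀^2 - 2*ε*Real.log (Real.sqrt (2*Real.pi) * Ia)))
        =o[𝓝[>] (0:ℝ)] (fun ε => ε)
    ∧ Tendsto μs (𝓝[>] (0:ℝ)) (𝓝 ω₀) := by
  set S : ℝ := Real.sqrt (2*Real.pi) * Ia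
  have hS : 0 < S := by positivity
  have hmem : ∀ᶠ ε in 𝓝[>] (0:ℝ), ε ∈ Set.Ioo (0:ℝ) ε₀ := Ioo_mem_nhdsGT hε₀
  have hR0 : Tendsto R (𝓝[>] 0) (𝓝 0) :=
    tendsto_nhdsGT_zero_of_norm_le_mul_sqrt (hmem.mono hR)
  have hA : Tendsto (fun ε => ‖(S : ℂ) + R ε‖) (𝓝[>] 0) (𝓝 S) := by
    simpa [abs_of_pos hS] using (tendsto_const_nhds (x := (S : ℂ))).add hR0 |>.norm
  have herror : (fun ε => (μs ε)^2 - (ω₀^2 - 2*ε*Real.log S)) =ᶠ[𝓝[>] 0]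
      fun ε => -2 * (ε * (Real.log ‖(S : ℂ) + R ε‖ - Real.log S)) := by
    filter_upwards [hmem] with ε hε
    linear_combination
      Real.eq_neg_mul_log_of_mul_exp_div_eq_one (hμs ε hε).2 (by linarith [hε.1])
  have hlo : (fun ε => (μs ε)^2 - (ω₀^2 - 2*ε*Real.log S)) =o[𝓝[>] (0:ℝ)] (fun ε => ε) :=
    ((isLittleO_mul_log_sub_log hA hS.ne').const_mul_left (-2)).congr' herror.symm
      EventuallyEq.rfl
  have hε0 : Tendsto (fun ε : ℝ => ε) (𝓝[>] 0) (𝓝 0) :=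
    tendsto_nhdsWithin_of_tendsto_nhds tendsto_id
  have hsq : Tendsto (fun ε => (μs ε)^2) (𝓝[>] 0) (𝓝 (ω₀^2)) := by
    simpa using (hlo.trans_tendsto hε0).add
      ((tendsto_const_nhds (x := ω₀^2)).sub ((hε0.const_mul 2).mul_const (Real.log S)))
      |>.congr fun ε => sub_add_cancel _ _
  exact ⟨hlo, tendsto_of_tendsto_sq (hmem.mono fun ε hε => (hμs ε hε).1.le) hω₀.le hsq⟩

theorem stmt_18 (ω₀ Ia C ε₀ : ℝ) (hω₀ : 0 < ω₀) (hIa : 0 < Ia) (hC : 0 < C)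
    (hε₀ : 0 < ε₀)
    (R : ℝ → ℂ)
    (hR : ∀ ε ∈ Set.Ioo (0:ℝ) ε₀, ‖R ε‖ ≤ C * Real.sqrt ε)
    (hne : ∀ ε ∈ Set.Ioo (0:ℝ) ε₀, ((Real.sqrt (2*Real.pi) * Ia : ℝ) : ℂ) + R ε ≠ 0)
    (μs : ℝ → ℝ)
    (hμs : ∀ ε ∈ Set.Ioo (0:ℝ) ε₀, 0 < μs ε ∧
      ‖((Real.sqrt (2*Real.pi) * Ia : ℝ) : ℂ) + R ε‖
        * Real.exp (((μs ε)^2 - ω₀^2)/(2*ε)) = 1) :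
    (fun ε => (μs ε)^2 - (ω₀^2 - 2*ε*Real.log (Real.sqrt (2*Real.pi) * Ia)))
        =o[𝓝[>] (0:ℝ)] (fun ε => ε)
    ∧ Tendsto μs (𝓝[>] (0:ℝ)) (𝓝 ω₀) :=
  stmt_18_general ω₀ Ia C ε₀ hω₀ hIa hε₀ R hR μs hμs
end
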